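/- Under the hypotheses of the probabilistic backlog bound (dynamic server, independence of A(u,t) and S(u,t) for each u, envelopes E[e^{θ·A(u,t)}] ≤ e^{θ·δ_b}·p^{t−u} and E[e^{−θ·S(u,t)}] ≤ q^{t−u}, and stability p·q < 1 with θ > 0, δ_b ≥ 0, p, q > 0), for any violation probability 0 < ε < 1, setting b^ε = δ_b + (1/θ)·( ln(1/ε) − ln(1 − p·q) ), the backlog B(t) = A(0,t) − D(0,t) satisfies P( B(t) > b^ε ) ≤ ε. (This is the backlog part of Theorem 2.) -/

import Mathlib

open MeasureTheory ProbabilityTheory Finset Real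

/-!
If the backlog at time `t` exceeds `b`, the dynamic server property yields some `τ ≤ t` with
`A(τ,t) - S(τ,t) > b`. For each such `τ` a Chernoff bound, using the independence of `A(τ,t)` and
`S(τ,t)`, bounds the probability by `e^{-θ b} e^{θ δ_b} (pq)^{t-τ}`, which for the chosen `b = bᵉ`
equals `ε (1 - pq) (pq)^{t-τ}`. A union bound over `τ` and the geometric series
`∑ (pq)^k ≤ 1 / (1 - pq)` give `ε`.
-/

lemma measureReal_lt_sub_le_exp_mul_mgf {Ω : Type*} [MeasurableSpace Ω] {μ : Measure Ω}
    [IsFiniteMeasure μ] {X Y : Ω → ℝ} (hXY : IndepFun X Y μ) {θ : ℝ} (hθ : 0 ≤ θ) (b : ℝ)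
    (hX : Integrable (fun ω => exp (θ * X ω)) μ) (hY : Integrable (fun ω => exp (-θ * Y ω)) μ) :
    μ.real {ω | b < X ω - Y ω} ≤ exp (-θ * b) * (mgf X μ θ * mgf Y μ (-θ)) := by
  have hXY' : IndepFun X (-Y) μ := hXY.comp measurable_id measurable_neg
  have hY' : Integrable (fun ω => exp (θ * (-Y) ω)) μ := by
    simpa only [Pi.neg_apply, mul_neg, neg_mul] using hY
  have hmgf : mgf (X + -Y) μ θ = mgf X μ θ * mgf Y μ (-θ) := by
    rw [hXY'.mgf_add hX.aestronglyMeasurable hY'.aestronglyMeasurable, mgf_neg]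
  calc μ.real {ω | b < X ω - Y ω}
      ≤ μ.real {ω | b ≤ (X + -Y) ω} :=
        measureReal_mono fun ω hω => by
          simp only [Set.mem_ofPred_eq, Pi.add_apply, Pi.neg_apply] at hω ⊢
          linarith
    _ ≤ exp (-θ * b) * mgf (X + -Y) μ θ :=
        measure_ge_le_exp_mul_mgf b hθ (hXY'.integrable_exp_mul_add hX hY')
    _ = exp (-θ * b) * (mgf X μ θ * mgf Y μ (-θ)) := by rw [hmgf]

lemma integrable_exp_neg_mul_of_nonneg {Ω : Type*} [MeasurableSpace Ω] {μ : Measure Ω}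
    [IsFiniteMeasure μ] {Y : Ω → ℝ} {θ : ℝ} (hθ : 0 ≤ θ) (hYm : AEMeasurable Y μ)
    (hY : ∀ ω, 0 ≤ Y ω) : Integrable (fun ω => exp (-θ * Y ω)) μ := by
  simpa only [mul_neg, neg_mul] using
    integrable_exp_mul_of_le (X := fun ω => -Y ω) θ 0 hθ hYm.neg
      (ae_of_all _ fun ω => neg_nonpos.mpr (hY ω))

lemma exists_lt_sub_of_lt_sub_of_inf'_le {a s : ℕ → ℝ} {t : ℕ} {d b : ℝ}
    (hd : (range (t + 1)).inf' ⟨0, by simp⟩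
      (fun τ => (∑ i ∈ Ico 0 τ, a i) + ∑ i ∈ Ico τ t, s i) ≤ d)
    (hb : b < (∑ i ∈ Ico 0 t, a i) - d) :
    ∃ τ ∈ range (t + 1), b < (∑ i ∈ Ico τ t, a i) - ∑ i ∈ Ico τ t, s i := by
  obtain ⟨τ, hτ, hlt⟩ := (inf'_lt_iff _).mp (hd.trans_lt (lt_sub_comm.mp hb))
  have hsplit := sum_Ico_consecutive a (Nat.zero_le τ) (Nat.lt_succ_iff.mp (mem_range.mp hτ))
  exact ⟨τ, hτ, by linarith⟩

lemma sum_range_pow_sub_le {r : ℝ} (hr0 : 0 ≤ r) (hr1 : r < 1) (t : ℕ) :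
    ∑ τ ∈ range (t + 1), r ^ (t - τ) ≤ 1 / (1 - r) := by
  calc ∑ τ ∈ range (t + 1), r ^ (t - τ) = ∑ k ∈ Ico 0 (t + 1), r ^ k := by
        simpa [← range_eq_Ico] using sum_range_reflect (fun k => r ^ k) (t + 1)
    _ ≤ r ^ 0 / (1 - r) := geom_sum_Ico_le_of_lt_one hr0 hr1
    _ = 1 / (1 - r) := by rw [pow_zero]

lemma exp_neg_mul_add_log_mul_exp {θ δ ε c : ℝ} (hθ : θ ≠ 0) (hε : 0 < ε) (hc : 0 < c) :
    exp (-θ * (δ + 1 / θ * (log (1 / ε) - log c))) * exp (θ * δ) = ε * c := by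
  have hexponent : -θ * (δ + 1 / θ * (log (1 / ε) - log c)) + θ * δ = log ε + log c := by
    rw [one_div ε, log_inv]
    field_simp
    ring
  rw [← exp_add, hexponent, exp_add, exp_log hε, exp_log hc]

lemma measureReal_lt_sub_le_of_mgf_le {Ω : Type*} [MeasurableSpace Ω] {μ : Measure Ω}
    [IsFiniteMeasure μ] {X Y : Ω → ℝ} (hXY : IndepFun X Y μ) {θ δ p q ε : ℝ} {n : ℕ}
    (hθ : 0 < θ) (hp : 0 < p) (hpq : p * q < 1) (hε : 0 < ε)
    (hX : Integrable (fun ω => exp (θ * X ω)) μ) (hY : Integrable (fun ω => exp (-θ * Y ω)) μ)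
    (hmgfX : mgf X μ θ ≤ exp (θ * δ) * p ^ n) (hmgfY : mgf Y μ (-θ) ≤ q ^ n) :
    μ.real {ω | δ + 1 / θ * (log (1 / ε) - log (1 - p * q)) < X ω - Y ω}
      ≤ ε * (1 - p * q) * (p * q) ^ n := by
  calc _ ≤ exp (-θ * (δ + 1 / θ * (log (1 / ε) - log (1 - p * q))))
          * (exp (θ * δ) * p ^ n * q ^ n) :=
        (measureReal_lt_sub_le_exp_mul_mgf hXY hθ.le _ hX hY).trans
          (mul_le_mul_of_nonneg_left (mul_le_mul hmgfX hmgfY mgf_nonneg (by positivity))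
            (exp_pos _).le)
    _ = ε * (1 - p * q) * (p * q) ^ n := by
        rw [mul_pow, ← exp_neg_mul_add_log_mul_exp hθ.ne' hε (sub_pos.mpr hpq)]
        ring

/-- backlog part of Theorem 2 of the paper. Under the hypotheses of
the probabilistic backlog bound (dynamic server, independence of `A(u,t)` and `S(u,t)`
for each `u`, envelopes `E[e^{θ A(u,t)}] ≤ e^{θ δ_b} p^{t-u}` and
`E[e^{-θ S(u,t)}] ≤ q^{t-u}`, stability `p·q < 1`), for any violation probability
`0 < ε < 1`, setting `bᵉ = δ_b + (1/θ)(ln(1/ε) - ln(1-pq))`, the backlog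
`B(t) = A(0,t) - D(0,t)` satisfies `P(B(t) > bᵉ) ≤ ε`. -/
theorem backlog_bound_of_violation_probability
    {Ω : Type*} [MeasureSpace Ω] [IsProbabilityMeasure (ℙ : Measure Ω)]
    (a s : ℕ → Ω → ℝ)
    (hsmeas : ∀ i, Measurable (s i)) (hs : ∀ i ω, 0 ≤ s i ω)
    (D : ℕ → Ω → ℝ)
    (hD : ∀ (t : ℕ) (ω : Ω),
      (range (t + 1)).inf' ⟨0, by simp⟩
          (fun τ => (∑ i ∈ Ico 0 τ, a i ω) + ∑ i ∈ Ico τ t, s i ω) ≤ D t ω)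
    (θ δb p q : ℝ) (hθ : 0 < θ) (hp : 0 < p) (hq : 0 < q)
    (hpq : p * q < 1) (t : ℕ)
    (hindep : ∀ u : ℕ, u ≤ t →
      IndepFun (fun ω => ∑ i ∈ Ico u t, a i ω) (fun ω => ∑ i ∈ Ico u t, s i ω) ℙ)
    (hAint : ∀ u : ℕ, u ≤ t →
      Integrable (fun ω => Real.exp (θ * ∑ i ∈ Ico u t, a i ω)) ℙ)
    (hA : ∀ u : ℕ, u ≤ t →
      ∫ ω : Ω, Real.exp (θ * ∑ i ∈ Ico u t, a i ω) ∂ℙ ≤ Real.exp (θ * δb) * p ^ (t - u))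
    (hS : ∀ u : ℕ, u ≤ t →
      ∫ ω : Ω, Real.exp (-θ * ∑ i ∈ Ico u t, s i ω) ∂ℙ ≤ q ^ (t - u))
    (ε : ℝ) (hε0 : 0 < ε) :
    (ℙ {ω : Ω |
        δb + (1 / θ) * (Real.log (1 / ε) - Real.log (1 - p * q)) <
          (∑ i ∈ Ico 0 t, a i ω) - D t ω}).toReal ≤ ε := by
  set b := δb + (1 / θ) * (Real.log (1 / ε) - Real.log (1 - p * q))
  have hstep : ∀ τ ∈ range (t + 1),
      (ℙ : Measure Ω).real {ω | b < (∑ i ∈ Ico τ t, a i ω) - ∑ i ∈ Ico τ t, s i ω}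
        ≤ ε * (1 - p * q) * (p * q) ^ (t - τ) := fun τ hτ =>
    have hτt : τ ≤ t := Nat.lt_succ_iff.mp (mem_range.mp hτ)
    measureReal_lt_sub_le_of_mgf_le (hindep τ hτt) hθ hp hpq hε0 (hAint τ hτt)
      (integrable_exp_neg_mul_of_nonneg hθ.le
        (Finset.measurable_sum (Ico τ t) fun i _ => hsmeas i).aemeasurable
        fun ω => sum_nonneg fun i _ => hs i ω)
      (hA τ hτt) (hS τ hτt)
  calc (ℙ {ω | b < (∑ i ∈ Ico 0 t, a i ω) - D t ω}).toReal
      ≤ (ℙ : Measure Ω).real (⋃ τ ∈ range (t + 1),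
          {ω | b < (∑ i ∈ Ico τ t, a i ω) - ∑ i ∈ Ico τ t, s i ω}) :=
        measureReal_mono (fun ω hω => by
          obtain ⟨τ, hτ, hlt⟩ := exists_lt_sub_of_lt_sub_of_inf'_le (hD t ω) hω
          exact Set.mem_biUnion hτ hlt) (measure_ne_top _ _)
    _ ≤ ∑ τ ∈ range (t + 1), ε * (1 - p * q) * (p * q) ^ (t - τ) :=
        (measureReal_biUnion_finset_le _ _).trans (sum_le_sum hstep)
    _ ≤ ε * (1 - p * q) * (1 / (1 - p * q)) := by
        rw [← mul_sum]
        gcongr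
        exact sum_range_pow_sub_le (mul_pos hp hq).le hpq t
    _ = ε := by rw [mul_assoc, mul_one_div_cancel (sub_pos.mpr hpq).ne', mul_one]
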